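/- Let m, n > 1 and k ≤ max(m,n). Then V_k is open in S_k, the set of separable states of length at most k, with respect to the subspace topology induced by the norm topology on matrices. -/

import Mathlib

open scoped Kronecker ComplexOrder

noncomputable section

/-- The vector state (rank-one projection onto `ℂx`) associated to a unit vector `x`. -/
def vecState {ι : Type*} [Fintype ι] (x : EuclideanSpace ℂ ι) : Matrix ι ι ℂ :=
  Matrix.of fun i j => x i * (starRingEnd ℂ) (x j)

/-- The (Kronecker) tensor product of two vectors. -/
def tensorVec {m n : ℕ} (x : EuclideanSpace ℂ (Fin m)) (y : EuclideanSpace ℂ (Fin n)) :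
    EuclideanSpace ℂ (Fin m × Fin n) :=
  WithLp.toLp 2 (fun p => x p.1 * y p.2)

/-- The state space of `B(ℂ^ι)`: density matrices. -/
def stateSet (ι : Type*) [Fintype ι] [DecidableEq ι] : Set (Matrix ι ι ℂ) :=
  {ρ | ρ.PosSemidef ∧ ρ.trace = 1}

/-- The set of separable states on `B(ℂᵐ ⊗ ℂⁿ)`: convex combinations of pure product states. -/
def sepSet (m n : ℕ) : Set (Matrix (Fin m × Fin n) (Fin m × Fin n) ℂ) :=
  {ρ | ∃ (r : ℕ) (lam : Fin r → ℝ) (x : Fin r → EuclideanSpace ℂ (Fin m))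
        (y : Fin r → EuclideanSpace ℂ (Fin n)),
      (∀ i, 0 ≤ lam i) ∧ (∑ i, lam i) = 1 ∧ (∀ i, ‖x i‖ = 1) ∧ (∀ i, ‖y i‖ = 1) ∧
      ρ = ∑ i, lam i • vecState (tensorVec (x i) (y i))}

/-- `F` is a face of the convex set `C`. -/
def IsFace {E : Type*} [AddCommGroup E] [Module ℝ E] (C F : Set E) : Prop :=
  F ⊆ C ∧ Convex ℝ F ∧
    ∀ ⦃x⦄, x ∈ C → ∀ ⦃y⦄, y ∈ C → ∀ ⦃z⦄, z ∈ openSegment ℝ x y → z ∈ F → x ∈ F ∧ y ∈ F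

/-- The smallest face of `C` containing `X`. -/
def faceGen {E : Type*} [AddCommGroup E] [Module ℝ E] (C X : Set E) : Set E :=
  ⋂₀ {F | IsFace C F ∧ X ⊆ F}

/-- `C` is the direct convex sum of the convex sets `F 1, …, F q`. -/
def IsDirectConvexSum {E : Type*} [AddCommGroup E] [Module ℝ E] {q : ℕ}
    (C : Set E) (F : Fin q → Set E) : Prop :=
  (∀ x ∈ C, ∃ (lam : Fin q → ℝ) (pt : Fin q → E),
      (∀ i, 0 ≤ lam i) ∧ (∑ i, lam i) = 1 ∧ (∀ i, lam i ≠ 0 → pt i ∈ F i) ∧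
      x = ∑ i, lam i • pt i) ∧
  (∀ (lam lam' : Fin q → ℝ) (pt pt' : Fin q → E),
      (∀ i, 0 ≤ lam i) → (∑ i, lam i) = 1 → (∀ i, lam i ≠ 0 → pt i ∈ F i) →
      (∀ i, 0 ≤ lam' i) → (∑ i, lam' i) = 1 → (∀ i, lam' i ≠ 0 → pt' i ∈ F i) →
      (∑ i, lam i • pt i) = (∑ i, lam' i • pt' i) →
      ∀ i, lam i = lam' i ∧ (lam i ≠ 0 → pt i = pt' i))

/-- A (finite-dimensional) convex set is a simplex: every point has a unique
representation as a convex combination of its extreme points. -/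
def IsSimplex {E : Type*} [AddCommGroup E] [Module ℝ E] (C : Set E) : Prop :=
  ∀ x ∈ C, ∃! w : E →₀ ℝ,
    ↑w.support ⊆ Set.extremePoints ℝ C ∧ (∀ y, 0 ≤ w y) ∧
    (w.sum fun _ a => a) = 1 ∧ (w.sum fun y a => a • y) = x

/-- Two convex sets (possibly in different ambient spaces) are affinely isomorphic. -/
def AffIsomorphic {E F' : Type*} [AddCommGroup E] [Module ℝ E] [AddCommGroup F'] [Module ℝ F']
    (A : Set E) (B : Set F') : Prop :=
  ∃ φ : E → F', Set.BijOn φ A B ∧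
    ∀ x ∈ A, ∀ y ∈ A, ∀ t : ℝ, 0 ≤ t → t ≤ 1 →
      φ (t • x + (1 - t) • y) = t • φ x + (1 - t) • φ y

/-- `ω` admits a decomposition as a convex combination of `r` pure product states. -/
def HasDecompOfSize (m n r : ℕ) (ω : Matrix (Fin m × Fin n) (Fin m × Fin n) ℂ) : Prop :=
  ∃ (lam : Fin r → ℝ) (x : Fin r → EuclideanSpace ℂ (Fin m))
    (y : Fin r → EuclideanSpace ℂ (Fin n)),
    (∀ i, 0 ≤ lam i) ∧ (∑ i, lam i) = 1 ∧ (∀ i, ‖x i‖ = 1) ∧ (∀ i, ‖y i‖ = 1) ∧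
    ω = ∑ i, lam i • vecState (tensorVec (x i) (y i))

/-- The separable state `ω` has length (optimal ensemble cardinality) exactly `k`. -/
def HasLength (m n k : ℕ) (ω : Matrix (Fin m × Fin n) (Fin m × Fin n) ℂ) : Prop :=
  HasDecompOfSize m n k ω ∧ ∀ r < k, ¬ HasDecompOfSize m n r ω

/-- `S_k`: the set of separable states of length at most `k`. -/
def lengthLeSet (m n k : ℕ) : Set (Matrix (Fin m × Fin n) (Fin m × Fin n) ℂ) :=
  {ω | ∃ r ≤ k, HasDecompOfSize m n r ω}

/-- `V_k`: the states `ω = Σᵢ λᵢ ω_{eᵢ⊗fᵢ}` with all `λᵢ > 0`, the lines `ℂeᵢ` pairwise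
distinct, and the `fᵢ` linearly independent. -/
def Vset (m n k : ℕ) : Set (Matrix (Fin m × Fin n) (Fin m × Fin n) ℂ) :=
  {ω | ∃ (lam : Fin k → ℝ) (e : Fin k → EuclideanSpace ℂ (Fin m))
        (f : Fin k → EuclideanSpace ℂ (Fin n)),
      (∀ i, 0 < lam i) ∧ (∑ i, lam i) = 1 ∧ (∀ i, ‖e i‖ = 1) ∧ (∀ i, ‖f i‖ = 1) ∧
      (∀ i j : Fin k, i ≠ j → Submodule.span ℂ {e i} ≠ Submodule.span ℂ {e j}) ∧
      LinearIndependent ℂ f ∧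
      ω = ∑ i, lam i • vecState (tensorVec (e i) (f i))}

/-!
A state of `V_k` has, up to phases and reordering, only one decomposition into `k` pure product
states: every product vector in its range lies in the span of the linearly independent vectors
`eᵢ ⊗ fᵢ`, hence (the lines `ℂeᵢ` being distinct) is a multiple of one of them, and the weights
are then read off by linear independence. Consequently every length-`k` decomposition of a state
of `V_k` has positive weights, distinct lines and independent second factors. Parametrising
`S_k` by the compact set of length-`k` ensembles of unit vectors, the complement of `V_k` in
`S_k` is thus the continuous image of the compact set of ensembles violating one of these open
conditions, hence closed.
-/

open scoped InnerProductSpace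
open Finset

section VectorStates

variable {ι κ : Type*} [Fintype ι] [Fintype κ]

lemma vecState_smul_of_norm_eq_one {c : ℂ} (hc : ‖c‖ = 1) (v : EuclideanSpace ℂ ι) :
    vecState (c • v) = vecState v := by
  have hcc : c * starRingEnd ℂ c = 1 := by
    rw [Complex.mul_conj, Complex.normSq_eq_norm_sq, hc]; norm_num
  ext p q
  simp only [vecState, Matrix.of_apply, PiLp.smul_apply, smul_eq_mul, map_mul]
  linear_combination (v p * starRingEnd ℂ (v q)) * hcc

variable [DecidableEq ι]

lemma toEuclideanLin_vecState (v u : EuclideanSpace ℂ ι) :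
    Matrix.toEuclideanLin (vecState v) u = ⟪v, u⟫_ℂ • v := by
  ext p
  simp [vecState, Matrix.mulVec, dotProduct, EuclideanSpace.inner_eq_star_dotProduct,
    Finset.mul_sum, mul_comm, mul_left_comm]

lemma toEuclideanLin_sum_smul_vecState (a : κ → ℝ) (v : κ → EuclideanSpace ℂ ι)
    (u : EuclideanSpace ℂ ι) :
    Matrix.toEuclideanLin (∑ i, a i • vecState (v i)) u = ∑ i, ((a i : ℂ) * ⟪v i, u⟫_ℂ) • v i := by
  simp only [← Complex.coe_smul, map_sum, map_smul, LinearMap.sum_apply, LinearMap.smul_apply,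
    toEuclideanLin_vecState, mul_smul]

lemma eq_of_sum_smul_vecState_eq {v : κ → EuclideanSpace ℂ ι} (hv : LinearIndependent ℂ v)
    {a b : κ → ℝ} (h : ∑ i, a i • vecState (v i) = ∑ i, b i • vecState (v i)) : a = b := by
  funext i
  have hsum := congrArg (fun M => Matrix.toEuclideanLin M (v i)) h
  simp only [toEuclideanLin_sum_smul_vecState] at hsum
  have hvi : ⟪v i, v i⟫_ℂ ≠ 0 := inner_self_ne_zero.mpr (hv.ne_zero i)
  exact_mod_cast mul_right_cancel₀ hvi (Fintype.linearIndependent_iffₛ.mp hv _ _ hsum i)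

lemma mem_span_of_sum_smul_vecState_eq {a b : κ → ℝ} {v w : κ → EuclideanSpace ℂ ι}
    (hb : ∀ j, 0 ≤ b j) (h : ∑ i, a i • vecState (v i) = ∑ j, b j • vecState (w j))
    {j : κ} (hj : b j ≠ 0) : w j ∈ Submodule.span ℂ (Set.range v) := by
  rw [← Submodule.orthogonal_orthogonal (Submodule.span ℂ (Set.range v)), Submodule.mem_orthogonal]
  intro u hu
  have hvu : ∀ i, ⟪v i, u⟫_ℂ = 0 := fun i =>
    Submodule.inner_right_of_mem_orthogonal (Submodule.subset_span (Set.mem_range_self i)) hu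
  have hquad : ∑ j, b j * ‖⟪u, w j⟫_ℂ‖ ^ 2 = 0 := by
    have := congrArg (fun M => ⟪u, Matrix.toEuclideanLin M u⟫_ℂ) h
    simp only [toEuclideanLin_sum_smul_vecState, hvu, mul_zero, zero_smul, sum_const_zero,
      inner_zero_right, inner_sum, inner_smul_right] at this
    have hterm : ∀ j, (b j : ℂ) * ⟪w j, u⟫_ℂ * ⟪u, w j⟫_ℂ = ((b j * ‖⟪u, w j⟫_ℂ‖ ^ 2 : ℝ) : ℂ) :=
      fun j => by rw [← inner_conj_symm, mul_assoc, RCLike.conj_mul]; push_cast; rfl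
    simp only [hterm, ← Complex.ofReal_sum] at this
    exact_mod_cast this.symm
  have := (sum_eq_zero_iff_of_nonneg fun j _ => mul_nonneg (hb j) (sq_nonneg _)).mp hquad j
    (mem_univ j)
  simpa [hj] using this

end VectorStates

section ProductVectors

variable {m n : ℕ} {ι : Type*} [Fintype ι]

@[simp]
lemma tensorVec_apply (x : EuclideanSpace ℂ (Fin m)) (y : EuclideanSpace ℂ (Fin n))
    (p : Fin m × Fin n) : tensorVec x y p = x p.1 * y p.2 :=
  rfl

lemma tensorVec_smul_smul (α β : ℂ) (x : EuclideanSpace ℂ (Fin m))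
    (y : EuclideanSpace ℂ (Fin n)) : tensorVec (α • x) (β • y) = (α * β) • tensorVec x y := by
  ext p
  simp only [tensorVec_apply, PiLp.smul_apply, smul_eq_mul]
  ring

lemma sum_smul_tensorVec_eq_tensorVec_iff {c : ι → ℂ} {e : ι → EuclideanSpace ℂ (Fin m)}
    {f : ι → EuclideanSpace ℂ (Fin n)} {x : EuclideanSpace ℂ (Fin m)}
    {y : EuclideanSpace ℂ (Fin n)} :
    ∑ i, c i • tensorVec (e i) (f i) = tensorVec x y ↔ ∀ a, ∑ i, (c i * e i a) • f i = x a • y := by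
  constructor
  · intro h a
    ext b
    simpa [mul_assoc] using congr($h (a, b))
  · intro h
    ext ⟨a, b⟩
    simpa [mul_assoc] using congr($(h a) b)

variable {e : ι → EuclideanSpace ℂ (Fin m)} {f : ι → EuclideanSpace ℂ (Fin n)}

lemma linearIndependent_tensorVec (he : ∀ i, e i ≠ 0) (hf : LinearIndependent ℂ f) :
    LinearIndependent ℂ fun i => tensorVec (e i) (f i) := by
  refine Fintype.linearIndependent_iff.mpr fun c hc i => ?_
  have hzero : tensorVec (0 : EuclideanSpace ℂ (Fin m)) (0 : EuclideanSpace ℂ (Fin n)) = 0 := by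
    ext p; simp
  rw [← hzero, sum_smul_tensorVec_eq_tensorVec_iff] at hc
  obtain ⟨a, ha⟩ : ∃ a, e i a ≠ 0 := by
    by_contra! h
    exact he i (PiLp.ext h)
  have := Fintype.linearIndependent_iff.mp hf _ (by simpa using hc a) i
  exact (mul_eq_zero.mp this).resolve_right ha

lemma exists_smul_eq_of_sum_smul_tensorVec_eq
    (hdist : Pairwise fun i j => Submodule.span ℂ {e i} ≠ Submodule.span ℂ {e j})
    (hf : LinearIndependent ℂ f) {x : EuclideanSpace ℂ (Fin m)} {y : EuclideanSpace ℂ (Fin n)}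
    (hx : x ≠ 0) (hy : y ≠ 0) {c : ι → ℂ} (h : ∑ i, c i • tensorVec (e i) (f i) = tensorVec x y) :
    ∃ i, ∃ α β : ℂ, x = α • e i ∧ y = β • f i := by
  rw [sum_smul_tensorVec_eq_tensorVec_iff] at h
  obtain ⟨a₀, ha₀⟩ : ∃ a, x a ≠ 0 := by
    by_contra! h
    exact hx (PiLp.ext h)
  set d : ι → ℂ := fun i => (x a₀)⁻¹ * (c i * e i a₀)
  have hyd : y = ∑ i, d i • f i := by
    rw [← inv_smul_smul₀ ha₀ y, ← h a₀, smul_sum]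
    simp only [d, smul_smul]
  -- comparing the slices `a` and `a₀` of `h` in the basis `f`
  have hce : ∀ i, c i • e i = d i • x := fun i => by
    ext a
    have := Fintype.linearIndependent_iffₛ.mp hf _ (fun i => x a * d i)
      (by rw [h a, hyd, smul_sum]; simp only [smul_smul]) i
    simpa [mul_comm] using this
  have hspan : ∀ i, d i ≠ 0 → Submodule.span ℂ {e i} = Submodule.span ℂ {x} := fun i hi => by
    have hci : c i ≠ 0 := by
      rintro hci
      simpa [hci, hi, hx] using (hce i).symm
    rw [← Submodule.span_singleton_smul_eq (IsUnit.mk0 _ hci), hce i,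
      Submodule.span_singleton_smul_eq (IsUnit.mk0 _ hi)]
  obtain ⟨j, hj⟩ : ∃ j, d j ≠ 0 := by
    by_contra! hd
    exact hy (by simpa [hd] using hyd)
  have hdj : ∀ i, i ≠ j → d i = 0 := fun i hij => by
    by_contra hi
    exact hdist hij ((hspan i hi).trans (hspan j hj).symm)
  refine ⟨j, (d j)⁻¹ * c j, d j, ?_, ?_⟩
  · rw [mul_smul, hce j, inv_smul_smul₀ hj]
  · rw [hyd, sum_eq_single j (fun i _ hij => by rw [hdj i hij, zero_smul]) (by simp)]

end ProductVectors

lemma bijective_and_eq_of_eq_sum_fiber {ι M : Type*} [Fintype ι] [DecidableEq ι]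
    [AddCommMonoid M] {σ : ι → ι} {a b : ι → M} (hb : ∀ i, b i ≠ 0)
    (h : ∀ i, b i = ∑ j with σ j = i, a j) : Function.Bijective σ ∧ ∀ j, a j = b (σ j) := by
  have hsurj : Function.Surjective σ := fun i => by
    by_contra! hi
    exact hb i (by rw [h i, sum_eq_zero fun j hj => absurd (mem_filter.mp hj).2 (hi j)])
  have hinj : Function.Injective σ := Finite.injective_iff_surjective.mpr hsurj
  refine ⟨⟨hinj, hsurj⟩, fun j => ?_⟩
  rw [h, sum_eq_single_of_mem j (by simp) fun j' hj' hne => absurd (hinj (mem_filter.mp hj').2) hne]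

lemma span_singleton_ne_iff_norm_inner_lt_one {E : Type*} [NormedAddCommGroup E]
    [InnerProductSpace ℂ E] {x y : E} (hx : ‖x‖ = 1) (hy : ‖y‖ = 1) :
    Submodule.span ℂ {x} ≠ Submodule.span ℂ {y} ↔ ‖⟪x, y⟫_ℂ‖ < 1 := by
  have hx0 : x ≠ 0 := by rintro rfl; simp at hx
  have hy0 : y ≠ 0 := by rintro rfl; simp at hy
  have hle : ‖⟪x, y⟫_ℂ‖ ≤ 1 := by simpa [hx, hy] using norm_inner_le_norm (𝕜 := ℂ) x y
  have hnorm : ‖⟪x, y⟫_ℂ‖ = 1 ↔ ‖⟪x, y⟫_ℂ‖ = ‖x‖ * ‖y‖ := by rw [hx, hy, mul_one]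
  rw [Ne, hle.lt_iff_ne, not_iff_not, hnorm, norm_inner_eq_norm_iff hx0 hy0,
    Submodule.span_singleton_eq_span_singleton]
  constructor
  · rintro ⟨z, rfl⟩
    exact ⟨z, z.ne_zero, rfl⟩
  · rintro ⟨r, hr, rfl⟩
    exact ⟨Units.mk0 r hr, rfl⟩

theorem exists_equiv_of_sum_smul_vecState_tensorVec_eq {m n : ℕ} {ι : Type*} [Fintype ι]
    {lam mu : ι → ℝ} {e x : ι → EuclideanSpace ℂ (Fin m)} {f y : ι → EuclideanSpace ℂ (Fin n)}
    (hlam : ∀ i, 0 < lam i) (he : ∀ i, ‖e i‖ = 1) (hf1 : ∀ i, ‖f i‖ = 1)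
    (hdist : Pairwise fun i j => Submodule.span ℂ {e i} ≠ Submodule.span ℂ {e j})
    (hf : LinearIndependent ℂ f) (hmu : ∀ j, 0 ≤ mu j) (hx : ∀ j, ‖x j‖ = 1)
    (hy : ∀ j, ‖y j‖ = 1)
    (h : ∑ i, lam i • vecState (tensorVec (e i) (f i)) =
      ∑ j, mu j • vecState (tensorVec (x j) (y j))) :
    ∃ σ : ι ≃ ι, ∀ j, mu j = lam (σ j) ∧
      ∃ α β : ℂ, ‖α‖ = 1 ∧ ‖β‖ = 1 ∧ x j = α • e (σ j) ∧ y j = β • f (σ j) := by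
  classical
  have he0 : ∀ i, e i ≠ 0 := fun i => norm_ne_zero_iff.mp (by simp [he i])
  have hterm : ∀ j, ∃ i, mu j ≠ 0 →
      ∃ α β : ℂ, ‖α‖ = 1 ∧ ‖β‖ = 1 ∧ x j = α • e i ∧ y j = β • f i := fun j => by
    by_cases hj : mu j = 0
    · exact ⟨j, fun hj' => absurd hj hj'⟩
    obtain ⟨c, hc⟩ := (Submodule.mem_span_range_iff_exists_fun ℂ).mp
      (mem_span_of_sum_smul_vecState_eq hmu h hj)
    obtain ⟨i, α, β, hxα, hyβ⟩ := exists_smul_eq_of_sum_smul_tensorVec_eq hdist hf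
      (ne_zero_of_norm_ne_zero (by simp [hx j])) (ne_zero_of_norm_ne_zero (by simp [hy j])) hc
    have hα : ‖α‖ = 1 := by simpa [hxα, norm_smul, he i] using hx j
    have hβ : ‖β‖ = 1 := by simpa [hyβ, norm_smul, hf1 i] using hy j
    exact ⟨i, fun _ => ⟨α, β, hα, hβ, hxα, hyβ⟩⟩
  choose σ hσ using hterm
  have hmix : ∑ j, mu j • vecState (tensorVec (x j) (y j)) =
      ∑ j, mu j • vecState (tensorVec (e (σ j)) (f (σ j))) := by
    refine sum_congr rfl fun j _ => ?_
    rcases eq_or_ne (mu j) 0 with hj | hj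
    · simp [hj]
    obtain ⟨α, β, hα, hβ, hxj, hyj⟩ := hσ j hj
    rw [hxj, hyj, tensorVec_smul_smul,
      vecState_smul_of_norm_eq_one (by rw [norm_mul, hα, hβ, one_mul])]
  have hfiber : lam = fun i => ∑ j with σ j = i, mu j := by
    refine eq_of_sum_smul_vecState_eq (linearIndependent_tensorVec he0 hf) ?_
    rw [h, hmix, ← sum_fiberwise univ σ]
    simp only [sum_smul]
    exact sum_congr rfl fun i _ => sum_congr rfl fun j hj => by rw [(mem_filter.mp hj).2]
  obtain ⟨hbij, hmu_eq⟩ :=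
    bijective_and_eq_of_eq_sum_fiber (fun i => (hlam i).ne') (congrFun hfiber)
  exact ⟨Equiv.ofBijective σ hbij,
    fun j => ⟨hmu_eq j, hσ j (by rw [hmu_eq j]; exact (hlam _).ne')⟩⟩

namespace HasDecompOfSize

variable {m n r : ℕ} {ω : Matrix (Fin m × Fin n) (Fin m × Fin n) ℂ}

lemma succ (h : HasDecompOfSize m n r ω) : HasDecompOfSize m n (r + 1) ω := by
  obtain ⟨lam, x, y, hlam, hsum, hx, hy, rfl⟩ := h
  obtain ⟨i₀⟩ : Nonempty (Fin r) := by
    rw [← Fin.pos_iff_nonempty, Nat.pos_iff_ne_zero]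
    rintro rfl
    simp at hsum
  refine ⟨Fin.cons 0 lam, Fin.cons (x i₀) x, Fin.cons (y i₀) y, Fin.cases le_rfl hlam, ?_,
    Fin.cases (hx i₀) hx, Fin.cases (hy i₀) hy, ?_⟩ <;>
  simp [Fin.sum_univ_succ, hsum]

lemma mono {k : ℕ} (h : HasDecompOfSize m n r ω) (hrk : r ≤ k) : HasDecompOfSize m n k ω :=
  Nat.le_induction h (fun _ _ => succ) k hrk

end HasDecompOfSize

abbrev ProductEnsemble (m n k : ℕ) : Type :=
  (Fin k → ℝ) × (Fin k → EuclideanSpace ℂ (Fin m)) × (Fin k → EuclideanSpace ℂ (Fin n))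

namespace ProductEnsemble

variable {m n k : ℕ}

def state (p : ProductEnsemble m n k) : Matrix (Fin m × Fin n) (Fin m × Fin n) ℂ :=
  ∑ i, p.1 i • vecState (tensorVec (p.2.1 i) (p.2.2 i))

def unitSet (m n k : ℕ) : Set (ProductEnsemble m n k) :=
  stdSimplex ℝ (Fin k) ×ˢ (Set.univ.pi fun _ => Metric.sphere 0 1) ×ˢ
    (Set.univ.pi fun _ => Metric.sphere 0 1)

/-- The conditions defining `V_k`, with distinctness of the lines `ℂxᵢ` of unit vectors put in
the open form `‖⟪xᵢ, xⱼ⟫‖ < 1`. -/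
def IsGeneric (p : ProductEnsemble m n k) : Prop :=
  (∀ i, 0 < p.1 i) ∧ (Pairwise fun i j => ‖⟪p.2.1 i, p.2.1 j⟫_ℂ‖ < 1) ∧
    LinearIndependent ℂ p.2.2

lemma continuous_state : Continuous (state : ProductEnsemble m n k → _) := by
  unfold state vecState
  fun_prop

lemma isCompact_unitSet : IsCompact (unitSet m n k) :=
  (isCompact_stdSimplex ℝ _).prod
    ((isCompact_univ_pi fun _ => isCompact_sphere _ _).prod
      (isCompact_univ_pi fun _ => isCompact_sphere _ _))

lemma isOpen_setOf_isGeneric : IsOpen {p : ProductEnsemble m n k | p.IsGeneric} := by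
  simp only [IsGeneric, Pairwise, Set.ofPred_and, Set.ofPred_forall]
  refine (isOpen_iInter_of_finite fun i => ?_).inter
    ((isOpen_iInter_of_finite fun i => isOpen_iInter_of_finite fun j =>
      isOpen_iInter_of_finite fun _ => ?_).inter ?_)
  · exact isOpen_lt continuous_const (by fun_prop)
  · exact isOpen_lt (by fun_prop) continuous_const
  · exact isOpen_setOfPred_linearIndependent.preimage (by fun_prop)

lemma lengthLeSet_subset_image_state : lengthLeSet m n k ⊆ state '' unitSet m n k := by
  rintro ω ⟨r, hrk, hω⟩
  obtain ⟨lam, x, y, hlam, hsum, hx, hy, rfl⟩ := hω.mono hrk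
  exact ⟨(lam, x, y), ⟨⟨hlam, hsum⟩, fun i _ => by simp [hx i], fun i _ => by simp [hy i]⟩, rfl⟩

lemma state_mem_Vset_iff {p : ProductEnsemble m n k} (hp : p ∈ unitSet m n k) :
    p.state ∈ Vset m n k ↔ p.IsGeneric := by
  obtain ⟨lam, x, y⟩ := p
  obtain ⟨⟨hlam, hsum⟩, hx, hy⟩ := hp
  simp only [Set.mem_pi, Set.mem_univ, mem_sphere_zero_iff_norm, true_implies] at hx hy
  constructor
  · rintro ⟨mu, e, f, hmu, -, he, hf1, hdist, hf, heq⟩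
    obtain ⟨σ, hσ⟩ :=
      exists_equiv_of_sum_smul_vecState_tensorVec_eq hmu he hf1 hdist hf hlam hx hy heq.symm
    choose hlam_eq α β hα hβ hxe hyf using hσ
    have hspan : ∀ i, Submodule.span ℂ {x i} = Submodule.span ℂ {e (σ i)} := fun i => by
      rw [hxe i, Submodule.span_singleton_smul_eq
        (IsUnit.mk0 _ (norm_ne_zero_iff.mp (hα i ▸ one_ne_zero)))]
    refine ⟨fun i => hlam_eq i ▸ hmu _, fun i j hij => ?_, ?_⟩
    · show ‖⟪x i, x j⟫_ℂ‖ < 1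
      rw [← span_singleton_ne_iff_norm_inner_lt_one (hx i) (hx j), hspan, hspan]
      exact hdist _ _ (σ.injective.ne hij)
    · convert (hf.comp σ σ.injective).units_smul fun i =>
        Units.mk0 (β i) (norm_ne_zero_iff.mp (hβ i ▸ one_ne_zero))
      exact funext hyf
  · rintro ⟨hpos, hlines, hind⟩
    exact ⟨lam, x, y, hpos, hsum, hx, hy,
      fun i j hij => (span_singleton_ne_iff_norm_inner_lt_one (hx i) (hx j)).mpr (hlines hij),
      hind, rfl⟩

end ProductEnsemble

attribute [local instance] Matrix.normedAddCommGroup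

theorem Vset_open_in_lengthLeSet_general {m n k : ℕ} :
    IsOpen (Subtype.val ⁻¹' Vset m n k : Set (lengthLeSet m n k)) := by
  set bad := ProductEnsemble.unitSet m n k ∩ {p | ¬ p.IsGeneric}
  have hbad : IsClosed (ProductEnsemble.state '' bad) :=
    ((ProductEnsemble.isCompact_unitSet.inter_right
      ProductEnsemble.isOpen_setOf_isGeneric.isClosed_compl).image
        ProductEnsemble.continuous_state).isClosed
  suffices h : (Subtype.val ⁻¹' Vset m n k : Set (lengthLeSet m n k)) =
      (Subtype.val ⁻¹' (ProductEnsemble.state '' bad))ᶜ by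
    rw [h]
    exact (hbad.preimage continuous_subtype_val).isOpen_compl
  ext ⟨ω, hω⟩
  obtain ⟨p, hp, rfl⟩ := ProductEnsemble.lengthLeSet_subset_image_state hω
  simp only [Set.mem_preimage, Set.mem_compl_iff, Set.mem_image, bad, Set.mem_inter_iff,
    Set.mem_ofPred_eq, ProductEnsemble.state_mem_Vset_iff hp]
  constructor
  · rintro hgen ⟨q, ⟨hq, hqgen⟩, hqp⟩
    exact hqgen ((ProductEnsemble.state_mem_Vset_iff hq).mp
      (hqp ▸ (ProductEnsemble.state_mem_Vset_iff hp).mpr hgen))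
  · intro h
    by_contra hgen
    exact h ⟨p, ⟨hp, hgen⟩, rfl⟩

/-- For `m, n > 1` and `k ≤ max(m,n)`, the set `V_k` is open in `S_k` (the set of
separable states of length at most `k`) for the subspace topology induced by the norm
topology on matrices. -/
theorem Vset_open_in_lengthLeSet {m n k : ℕ}
    (hm : 1 < m) (hn : 1 < n) (hk : k ≤ max m n) :
    IsOpen (Subtype.val ⁻¹' Vset m n k : Set (lengthLeSet m n k)) :=
  Vset_open_in_lengthLeSet_general

end
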